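/- Let a, b ∈ ℂ with ab ≠ 0 and E(z) = a·e^z + b·e^{−z}. Let U′ ⊂ ℂ be open, simply connected, and containing no critical value of E (no w with w² = 4ab). Then for every connected component W of E^{−1}(U′), the restriction of E to W is a bijection (in fact a conformal isomorphism) from W onto U′. -/

import Mathlib

open Filter Topology Set MeasureTheory

noncomputable section

/-- The cosine-type map `E(z) = a e^z + b e^{-z}`. -/
def E (a b : ℂ) (z : ℂ) : ℂ := a * Complex.exp z + b * Complex.exp (-z)

/-- `z` escapes to infinity under iteration of `E a b`. -/
def Escapes (a b : ℂ) (z : ℂ) : Prop :=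
  Tendsto (fun k => ‖(E a b)^[k] z‖) atTop atTop

/-- `F(t) = e^t - 1`. -/
def FF (t : ℝ) : ℝ := Real.exp t - 1

/-- External addresses: entry `n` is `s_{n+1}`, an integer together with a label
(`true` = `R`, `false` = `L`). -/
abbrev Address := ℕ → ℤ × Bool

/-- The left shift on external addresses. -/
def shift (s : Address) : Address := fun n => s (n + 1)

/-- The minimal potential `t_s` (infimum of admissible potentials; the set is
nonempty for exponentially bounded addresses). -/
def tmin (s : Address) : ℝ :=
  sInf {t : ℝ | 0 < t ∧
    Tendsto (fun k : ℕ => (|(s k).1| : ℝ) / FF^[k + 1] t) atTop (nhds 0)}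

/-- An address is exponentially bounded if `|s_k| ≤ F^{∘(k-1)}(x)` for some `x > 0`. -/
def ExpBounded (s : Address) : Prop :=
  ∃ x > 0, ∀ k : ℕ, (|(s k).1| : ℝ) ≤ FF^[k] x

/-- A dynamic ray family for `E a b`. -/
structure RayFamily (a b : ℂ) where
  α : ℂ
  β : ℂ
  g : Address → ℝ → ℂ
  injOn : ∀ s : Address, ExpBounded s → Set.InjOn (g s) (Set.Ioi (tmin s))
  contOn : ∀ s : Address, ExpBounded s → ContinuousOn (g s) (Set.Ioi (tmin s))
  asympR : ∀ s : Address, ExpBounded s → (s 0).2 = true →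
    Tendsto (fun t : ℝ => g s t - ((t : ℂ) - α + 2 * (Real.pi : ℂ) * Complex.I * ((s 0).1 : ℂ)))
      atTop (nhds 0)
  asympL : ∀ s : Address, ExpBounded s → (s 0).2 = false →
    Tendsto (fun t : ℝ => g s t - (-(t : ℂ) + β + 2 * (Real.pi : ℂ) * Complex.I * ((s 0).1 : ℂ)))
      atTop (nhds 0)
  conj : ∀ s : Address, ExpBounded s → ∀ t : ℝ, tmin s < t →
    E a b (g s t) = g (shift s) (FF t)
  mem_escaping : ∀ s : Address, ExpBounded s → ∀ t : ℝ, tmin s < t → Escapes a b (g s t)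

/-- The union of all dynamic rays. -/
def RaySet (a b : ℂ) (rf : RayFamily a b) : Set ℂ :=
  {z : ℂ | ∃ s : Address, ExpBounded s ∧ ∃ t : ℝ, tmin s < t ∧ z = rf.g s t}

/-- The ray `g_s` lands at `z`. -/
def Lands (a b : ℂ) (rf : RayFamily a b) (s : Address) (z : ℂ) : Prop :=
  Tendsto (rf.g s) (nhdsWithin (tmin s) (Set.Ioi (tmin s))) (nhds z)

/-- `E a b` is postsingularly preperiodic: both critical values are strictly preperiodic. -/
def PostsingularlyPreperiodic (a b : ℂ) : Prop :=
  ∀ w : ℂ, w ^ 2 = 4 * a * b →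
    (∃ k ≥ 1, ∃ n ≥ 1, (E a b)^[k + n] w = (E a b)^[k] w) ∧
    (∀ m ≥ 1, (E a b)^[m] w ≠ w)

/-!
Off the critical values, `E a b z = w` means that `u = exp z` is a root of `a u² - w u + b`,
i.e. `u = (w + r) / 2a` with `r² = w² - 4ab ≠ 0`. On a simply connected `U'` both the square
root `r` and then the logarithm of `u` have continuous branches, normalised so as to pass through
a given point `z` of `E⁻¹(U')`; this is a continuous right inverse `σ` of `E` on `U'` with
`σ (E z) = z`. As `E' ≠ 0` off the critical points, `E` is locally injective on `E⁻¹(U')`, so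
the locus where `σ ∘ E = id` is clopen there and contains the component `W` of `z`: `E` is
injective on `W`, and `W` contains the connected set `σ(U')`, which gives surjectivity.
-/

section RightInverse

variable {X Y : Type*} [TopologicalSpace X] [TopologicalSpace Y] {p : X → Y} {σ : Y → X}
  {U : Set Y} {x : X}

theorem eqOn_connectedComponentIn_of_rightInvOn [T2Space X] (hp : ContinuousOn p (p ⁻¹' U))
    (hinj : ∀ z ∈ p ⁻¹' U, ∃ N ∈ 𝓝 z, InjOn p N) (hσ : ContinuousOn σ U)
    (hσp : RightInvOn σ p U) (hx : p x ∈ U) (hσx : σ (p x) = x) :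
    EqOn (σ ∘ p) id (connectedComponentIn (p ⁻¹' U) x) := by
  set S := p ⁻¹' U
  let q : S → Y := fun z => p z
  have hq : IsLocallyInjective q := isLocallyInjective_iff_nhds.mpr fun z => by
    obtain ⟨N, hN, hNinj⟩ := hinj z z.2
    exact ⟨Subtype.val ⁻¹' N, continuous_subtype_val.continuousAt.preimage_mem_nhds hN,
      fun _ h₁ _ h₂ h => Subtype.ext (hNinj h₁ h₂ h)⟩
  let g : S → S := fun z => ⟨σ (p z), show p (σ (p z)) ∈ U from (hσp z.2).symm ▸ z.2⟩
  have hg : Continuous g := (hσ.comp_continuous hp.domRestrict fun z => z.2).subtype_mk _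
  have hC : IsPreconnected (Subtype.val ⁻¹' connectedComponentIn S x : Set S) := by
    rw [← Topology.IsInducing.subtypeVal.isPreconnected_image, Subtype.image_preimage_coe,
      inter_eq_right.mpr (connectedComponentIn_subset S x)]
    exact isPreconnected_connectedComponentIn
  have key := (T2Space.isSeparatedMap q).eqOn_of_comp_eqOn hq hC hg.continuousOn
    continuous_id.continuousOn (fun z _ => hσp z.2) (a := (⟨x, hx⟩ : S))
    (mem_connectedComponentIn hx) (Subtype.ext hσx)
  intro z hz
  exact congrArg Subtype.val (key (x := ⟨z, connectedComponentIn_subset S x hz⟩) hz)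

theorem bijOn_connectedComponentIn_of_rightInvOn [T2Space X] (hU : IsPreconnected U)
    (hp : ContinuousOn p (p ⁻¹' U)) (hinj : ∀ z ∈ p ⁻¹' U, ∃ N ∈ 𝓝 z, InjOn p N)
    (hσ : ContinuousOn σ U) (hσp : RightInvOn σ p U) (hx : p x ∈ U) (hσx : σ (p x) = x) :
    BijOn p (connectedComponentIn (p ⁻¹' U) x) U := by
  have hfix := eqOn_connectedComponentIn_of_rightInvOn hp hinj hσ hσp hx hσx
  refine ⟨fun z hz => connectedComponentIn_subset _ x hz, fun z₁ h₁ z₂ h₂ h => ?_, fun y hy => ?_⟩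
  · exact (hfix h₁).symm.trans ((congrArg σ h).trans (hfix h₂))
  · have hσU : σ '' U ⊆ connectedComponentIn (p ⁻¹' U) x :=
      (hU.image σ hσ).subset_connectedComponentIn ⟨p x, hx, hσx⟩
        (by rintro _ ⟨y, hy, rfl⟩; rw [mem_preimage, hσp hy]; exact hy)
    exact ⟨σ y, hσU (mem_image_of_mem σ hy), hσp hy⟩

end RightInverse

namespace Complex

variable {X : Type*} [TopologicalSpace X] [LocallyPathConnectedSpace X] {U : Set X} {g : X → ℂ}
  {x₀ : X}

theorem exists_continuousOn_eqOn_exp_comp_of_exp_eq (hUc : IsSimplyConnected U) (hUo : IsOpen U)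
    (hgc : ContinuousOn g U) (hU₀ : 0 ∉ g '' U) (hx₀ : x₀ ∈ U) {c : ℂ} (hc : exp c = g x₀) :
    ∃ f : X → ℂ, ContinuousOn f U ∧ EqOn (exp ∘ f) g U ∧ f x₀ = c := by
  obtain ⟨f, hfc, hf⟩ := exists_continuousOn_eqOn_exp_comp hUc hUo hgc hU₀
  obtain ⟨n, hn⟩ := exp_eq_exp_iff_exists_int.mp ((hf hx₀).trans hc.symm)
  refine ⟨fun x => f x - n * (2 * Real.pi * I), hfc.sub continuousOn_const, fun x hx => ?_, ?_⟩
  · simpa [exp_sub, exp_int_mul_two_pi_mul_I] using hf hx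
  · simp [hn]

theorem exists_continuousOn_sq_eq_of_sq_eq (hUc : IsSimplyConnected U) (hUo : IsOpen U)
    (hgc : ContinuousOn g U) (hU₀ : 0 ∉ g '' U) {c : ℂ} (hc : c ^ 2 = g x₀) :
    ∃ r : X → ℂ, ContinuousOn r U ∧ (∀ x, r x ^ 2 = g x) ∧ r x₀ = c := by
  obtain ⟨r, hrc, hr⟩ := exists_continuousOn_pow_eq hUc hUo hgc hU₀ two_ne_zero
  rcases sq_eq_sq_iff_eq_or_eq_neg.mp ((hr x₀).trans hc.symm) with h | h
  · exact ⟨r, hrc, hr, h⟩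
  · exact ⟨fun x => -r x, hrc.neg, fun x => by rw [neg_sq, hr], show -r x₀ = c by rw [h, neg_neg]⟩

end Complex

open Complex

theorem hasStrictDerivAt_E (a b z : ℂ) :
    HasStrictDerivAt (E a b) (a * exp z - b * exp (-z)) z :=
  (((hasStrictDerivAt_exp z).const_mul a).add
    (((hasStrictDerivAt_exp (-z)).comp z (hasStrictDerivAt_neg z)).const_mul b)).congr_deriv
    (by ring)

theorem continuous_E (a b : ℂ) : Continuous (E a b) := by
  unfold E
  fun_prop

theorem E_sq_sub_deriv_sq (a b z : ℂ) :
    E a b z ^ 2 - (a * exp z - b * exp (-z)) ^ 2 = 4 * a * b := by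
  have h : exp z * exp (-z) = 1 := by rw [← exp_add, add_neg_cancel, exp_zero]
  rw [E]
  linear_combination 4 * a * b * h

theorem exists_mem_nhds_injOn_E {a b z : ℂ} (hz : E a b z ^ 2 ≠ 4 * a * b) :
    ∃ N ∈ 𝓝 z, InjOn (E a b) N := by
  have hd : a * exp z - b * exp (-z) ≠ 0 := fun h => hz (by simpa [h] using E_sq_sub_deriv_sq a b z)
  exact ⟨_, (hasStrictDerivAt_E a b z).eventually_left_inverse hd,
    fun x hx y hy h => hx.symm.trans (h ▸ hy)⟩

theorem E_eq_of_exp_eq {a b r w z : ℂ} (ha : a ≠ 0) (hr : r ^ 2 = w ^ 2 - 4 * a * b)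
    (hz : exp z = (w + r) / (2 * a)) : E a b z = w := by
  have hz' : 2 * a * exp z = w + r := by rw [hz]; field_simp
  have hquad : a * exp z ^ 2 - w * exp z + b = 0 := by
    have h4 : 4 * a * (a * exp z ^ 2 - w * exp z + b) = 0 := by
      linear_combination (2 * a * exp z + r - w) * hz' + hr
    simpa [ha] using h4
  have hexp := exp_ne_zero z
  rw [E, exp_neg]
  field_simp
  linear_combination hquad

theorem exists_rightInvOn_E {a b : ℂ} (hab : a * b ≠ 0) {U : Set ℂ} (hUo : IsOpen U)
    (hUc : IsSimplyConnected U) (hcv : ∀ w ∈ U, w ^ 2 ≠ 4 * a * b) {z : ℂ} (hz : E a b z ∈ U) :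
    ∃ σ : ℂ → ℂ, ContinuousOn σ U ∧ RightInvOn σ (E a b) U ∧ σ (E a b z) = z := by
  have ha : a ≠ 0 := left_ne_zero_of_mul hab
  -- `r (E z) = E' z` is the branch for which `(E z + r (E z)) / 2a = exp z`.
  obtain ⟨r, hrc, hr, hrz⟩ := exists_continuousOn_sq_eq_of_sq_eq hUc hUo
    (g := fun w => w ^ 2 - 4 * a * b) (x₀ := E a b z) (c := a * exp z - b * exp (-z)) (by fun_prop)
    (fun ⟨w, hw, h⟩ => hcv w hw (sub_eq_zero.mp h))
    (by linear_combination (E_sq_sub_deriv_sq a b z).symm)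
  set u : ℂ → ℂ := fun w => (w + r w) / (2 * a)
  have hu₀ : 0 ∉ u '' U := by
    rintro ⟨w, -, hw⟩
    have hrw : r w = -w := by
      simp only [u, div_eq_zero_iff, mul_eq_zero, two_ne_zero, ha, or_self, or_false] at hw
      linear_combination hw
    apply hab
    linear_combination (by rw [← hr w, hrw, neg_sq] : w ^ 2 = w ^ 2 - 4 * a * b) / 4
  have hu : u (E a b z) = exp z := by
    simp only [u, hrz]
    field_simp
    rw [E]
    ring
  obtain ⟨σ, hσc, hσ, hσz⟩ := exists_continuousOn_eqOn_exp_comp_of_exp_eq hUc hUo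
    ((continuousOn_id.add hrc).div_const _) hu₀ hz hu.symm
  exact ⟨σ, hσc, fun w hw => E_eq_of_exp_eq ha (hr w) (hσ hw), hσz⟩

/-- over a simply connected open set avoiding the critical values,
every component of the preimage maps bijectively. -/
theorem preimage_components_bijective (a b : ℂ) (hab : a * b ≠ 0)
    (U' : Set ℂ) (hopen : IsOpen U') (hsc : SimplyConnectedSpace ↥U')
    (hcv : ∀ w ∈ U', w ^ 2 ≠ 4 * a * b)
    (z : ℂ) (hz : z ∈ E a b ⁻¹' U') :
    Set.BijOn (E a b) (connectedComponentIn (E a b ⁻¹' U') z) U' := by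
  have hU' : IsSimplyConnected U' := hsc
  obtain ⟨σ, hσc, hσ, hσz⟩ := exists_rightInvOn_E hab hopen hU' hcv hz
  exact bijOn_connectedComponentIn_of_rightInvOn hU'.isPathConnected.isConnected.isPreconnected
    (continuous_E a b).continuousOn (fun x hx => exists_mem_nhds_injOn_E (hcv _ hx)) hσc hσ hz hσz
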